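/- arXiv:1304.3319 — 4 statements merged into one kernel-verified Lean document; each statement's English description precedes it below -/
import Mathlib

section
/- The number x(b) = ∑_{j=0}^∞ 1/b^(2^j), for an integer b ≥ 3, is irrational. -/
/-!
Multiplying `x = ∑ b^(-2^j)` by `b^(2^m)` turns the first `m + 1` terms into integers and leaves
the tail `b^(2^m) ∑_{j > m} b^(-2^j)`, which is positive and at most `b^(-2^m) · b / (b - 1)`.
So integer multiples of `x` come arbitrarily close to integers without hitting them, which is
impossible for a rational `a / c`: there `q a / c - p` is `0` or at least `1 / |c|` in size.
-/

open Finset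

theorem irrational_of_forall_exists_int_approx {x : ℝ}
    (h : ∀ ε > 0, ∃ p q : ℤ, 0 < |q * x - p| ∧ |q * x - p| < ε) : Irrational x := by
  refine (irrational_iff_ne_rational x).2 fun a c hc hx => ?_
  have hc' : (0 : ℝ) < |(c : ℝ)| := by positivity
  obtain ⟨p, q, hpos, hlt⟩ := h (1 / |(c : ℝ)|) (by positivity)
  have hqx : |q * x - p| = |((q * a - p * c : ℤ) : ℝ)| / |(c : ℝ)| := by
    rw [← abs_div, hx]; push_cast; field_simp
  rw [hqx] at hpos hlt
  have hne : q * a - p * c ≠ 0 := by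
    rintro h0; simp [h0] at hpos
  have : (1 : ℝ) ≤ |((q * a - p * c : ℤ) : ℝ)| := by
    rw [← Int.cast_abs]; exact_mod_cast Int.one_le_abs hne
  rw [div_lt_div_iff_of_pos_right hc'] at hlt
  linarith

theorem Nat.two_pow_add_le_two_pow_add (M j : ℕ) : 2 ^ M + j ≤ 2 ^ (j + M) := by
  have h1 : j + 1 ≤ 2 ^ j := Nat.lt_two_pow_self
  have h2 : 1 ≤ 2 ^ M := Nat.one_le_two_pow
  rw [pow_add]; nlinarith

theorem summable_pow_two_pow {r : ℝ} (hr0 : 0 ≤ r) (hr1 : r < 1) :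
    Summable fun j : ℕ => r ^ 2 ^ j :=
  (summable_geometric_of_lt_one hr0 hr1).of_nonneg_of_le (fun _ => pow_nonneg hr0 _)
    fun _ => pow_le_pow_of_le_one hr0 hr1.le Nat.lt_two_pow_self.le

theorem tsum_pow_two_pow_add_le {r : ℝ} (hr0 : 0 ≤ r) (hr1 : r < 1) (M : ℕ) :
    ∑' j : ℕ, r ^ 2 ^ (j + M) ≤ r ^ 2 ^ M / (1 - r) := by
  have hle : ∀ j : ℕ, r ^ 2 ^ (j + M) ≤ r ^ 2 ^ M * r ^ j := fun j => by
    rw [← pow_add]; exact pow_le_pow_of_le_one hr0 hr1.le (Nat.two_pow_add_le_two_pow_add M j)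
  have hgeom := (summable_geometric_of_lt_one hr0 hr1).mul_left (r ^ 2 ^ M)
  calc ∑' j : ℕ, r ^ 2 ^ (j + M)
      ≤ ∑' j : ℕ, r ^ 2 ^ M * r ^ j :=
        (hgeom.of_nonneg_of_le (fun _ => pow_nonneg hr0 _) hle).tsum_le_tsum hle hgeom
    _ = r ^ 2 ^ M / (1 - r) := by
        rw [tsum_mul_left, tsum_geometric_of_lt_one hr0 hr1, div_eq_mul_inv]

theorem exists_pow_mul_sum_inv_pow_two_pow_eq_natCast {b : ℕ} (hb : b ≠ 0) (m : ℕ) :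
    ∃ N : ℕ, (b : ℝ) ^ 2 ^ m * ∑ j ∈ range (m + 1), (b : ℝ)⁻¹ ^ 2 ^ j = N := by
  refine ⟨∑ j ∈ range (m + 1), b ^ (2 ^ m - 2 ^ j), ?_⟩
  push_cast
  rw [mul_sum]
  refine sum_congr rfl fun j hj => ?_
  have hjm : 2 ^ j ≤ 2 ^ m := Nat.pow_le_pow_right two_pos (Nat.lt_succ_iff.1 (mem_range.1 hj))
  rw [pow_sub₀ _ (Nat.cast_ne_zero.2 hb) hjm, inv_pow]

theorem exists_int_approx_tsum_inv_pow_two_pow {b : ℕ} (hb : 1 < b) {ε : ℝ} (hε : 0 < ε) :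
    ∃ p q : ℤ, 0 < |q * ∑' j : ℕ, (b : ℝ)⁻¹ ^ 2 ^ j - p| ∧
      |q * ∑' j : ℕ, (b : ℝ)⁻¹ ^ 2 ^ j - p| < ε := by
  set r : ℝ := (b : ℝ)⁻¹
  have hb' : (1 : ℝ) < b := by exact_mod_cast hb
  have hr0 : 0 < r := by positivity
  have hr1 : r < 1 := inv_lt_one_of_one_lt₀ hb'
  have h1r : 0 < 1 - r := sub_pos.2 hr1
  obtain ⟨m, hm⟩ := exists_pow_lt_of_lt_one (mul_pos hε h1r) hr1
  obtain ⟨N, hN⟩ := exists_pow_mul_sum_inv_pow_two_pow_eq_natCast (by omega : b ≠ 0) m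
  have hsum := summable_pow_two_pow hr0.le hr1
  have htail : 0 < ∑' j : ℕ, r ^ 2 ^ (j + (m + 1)) :=
    ((summable_nat_add_iff (m + 1)).2 hsum).tsum_pos (fun _ => by positivity) 0 (by positivity)
  have hdiff : (b : ℝ) ^ 2 ^ m * ∑' j : ℕ, r ^ 2 ^ j - N
      = (b : ℝ) ^ 2 ^ m * ∑' j : ℕ, r ^ 2 ^ (j + (m + 1)) := by
    rw [← hN, ← hsum.sum_add_tsum_nat_add (m + 1)]; ring
  have hcancel : (b : ℝ) ^ 2 ^ m * r ^ 2 ^ (m + 1) = r ^ 2 ^ m := by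
    rw [pow_succ, pow_mul, sq, ← mul_assoc, ← mul_pow, mul_inv_cancel₀ (by positivity), one_pow,
      one_mul]
  refine ⟨N, (b : ℤ) ^ 2 ^ m, ?_⟩
  push_cast
  rw [hdiff, abs_of_pos (by positivity)]
  refine ⟨by positivity, ?_⟩
  calc (b : ℝ) ^ 2 ^ m * ∑' j : ℕ, r ^ 2 ^ (j + (m + 1))
      ≤ (b : ℝ) ^ 2 ^ m * (r ^ 2 ^ (m + 1) / (1 - r)) :=
        mul_le_mul_of_nonneg_left (tsum_pow_two_pow_add_le hr0.le hr1 _) (by positivity)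
    _ = r ^ 2 ^ m / (1 - r) := by rw [← mul_div_assoc, hcancel]
    _ ≤ r ^ m / (1 - r) := by
        gcongr ?_ / _
        exact pow_le_pow_of_le_one hr0.le hr1.le Nat.lt_two_pow_self.le
    _ < ε := by rwa [div_lt_iff₀ h1r]

theorem xb_irrational (b : ℕ) (hb : 3 ≤ b) :
    Irrational (∑' j : ℕ, 1 / (b : ℝ) ^ 2 ^ j) := by
  simp_rw [one_div, ← inv_pow]
  exact irrational_of_forall_exists_int_approx fun ε hε =>
    exists_int_approx_tsum_inv_pow_two_pow (by omega) hε
end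

section
/- For the partial quotients (a_k) of x(b) and n = 2^j with n ≥ 8, a_k = a_{n+k} for all 2 ≤ k ≤ n/2 - 1. -/
/-- Partial quotients of x(b) via the folding recursion (fuel-based; fuel `k` suffices
since every recursive call has a strictly smaller index). -/
def cfAAux (b : ℤ) : ℕ → ℕ → ℤ
  | 0, _ => 0
  | fuel + 1, k =>
    if k = 0 then 0
    else if k = 1 then b - 1
    else if k = 2 then b + 2
    else
      let n := 2 ^ Nat.log2 (k - 1)
      if k = n + 1 then cfAAux b fuel n - 2
      else if k = 2 * n then cfAAux b fuel 1 + 1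
      else cfAAux b fuel (2 * n + 1 - k)

/-- `cfA b k` = the k-th partial quotient `a_k` of x(b). -/
def cfA (b : ℤ) (k : ℕ) : ℤ := cfAAux b k k

lemma cfAAux_succ (b : ℤ) (f k : ℕ) : cfAAux b (f + 1) k =
    if k = 0 then 0
    else if k = 1 then b - 1
    else if k = 2 then b + 2
    else
      let n := 2 ^ Nat.log2 (k - 1)
      if k = n + 1 then cfAAux b f n - 2
      else if k = 2 * n then cfAAux b f 1 + 1
      else cfAAux b f (2 * n + 1 - k) := rfl

lemma log2_pow_le (k : ℕ) (h : 1 ≤ k) : 2 ^ Nat.log2 k ≤ k := by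
  rw [Nat.log2_eq_log_two]
  exact Nat.pow_log_le_self 2 (by omega)

lemma cfAAux_congr (b : ℤ) : ∀ f g k, k ≤ f → k ≤ g → cfAAux b f k = cfAAux b g k := by
  intro f
  induction f with
  | zero =>
    intro g k hf hg
    interval_cases k
    cases g <;> simp [cfAAux]
  | succ f ih =>
    intro g k hf hg
    match g with
    | 0 => interval_cases k; simp [cfAAux]
    | g + 1 =>
      rw [cfAAux_succ, cfAAux_succ]
      by_cases h0 : k = 0
      · simp [h0]
      by_cases h1 : k = 1
      · simp [h1]
      by_cases h2 : k = 2
      · simp [h2]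
      simp only [h0, h1, h2, if_false]
      have hk3 : 3 ≤ k := by omega
      have hle : 2 ^ Nat.log2 (k - 1) ≤ k - 1 := log2_pow_le _ (by omega)
      set n := 2 ^ Nat.log2 (k - 1) with hndef
      split_ifs with hA hB
      · rw [ih g n (by omega) (by omega)]
      · rw [ih g 1 (by omega) (by omega)]
      · rw [ih g (2 * n + 1 - k) (by omega) (by omega)]

theorem a_period (b : ℤ) (hb : 3 ≤ b) (j n : ℕ) (hn : n = 2 ^ j) (h8 : 8 ≤ n)
    (k : ℕ) (hk : 2 ≤ k) (hk' : k ≤ n / 2 - 1) :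
    cfA b k = cfA b (n + k) := by
  have hj3 : 3 ≤ j := by
    by_contra h
    interval_cases j <;> omega
  have hj : ∃ j', j = j' + 1 := ⟨j - 1, by omega⟩
  obtain ⟨j', rfl⟩ := hj
  have hhalf : n / 2 = 2 ^ j' := by rw [hn, pow_succ]; omega
  have hkn : k ≤ 2 ^ j' - 1 := by rw [← hhalf]; exact hk'
  have h2j' : 8 ≤ 2 * 2 ^ j' := by rw [hn, pow_succ] at h8; omega
  have hn2 : n = 2 * 2 ^ j' := by rw [hn, pow_succ]; ring
  -- Step 1: unfold cfA b (n + k)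
  have hlog1 : Nat.log2 (n + k - 1) = j' + 1 := by
    rw [Nat.log2_eq_log_two]
    apply Nat.log_eq_of_pow_le_of_lt_pow
    · rw [← hn]; omega
    · rw [pow_succ, ← hn]; omega
  have step1 : cfA b (n + k) = cfAAux b (n + k - 1) (n + 1 - k) := by
    show cfAAux b (n + k) (n + k) = _
    obtain ⟨f, hf⟩ : ∃ f, n + k = f + 1 := ⟨n + k - 1, by omega⟩
    rw [hf, cfAAux_succ]
    have hf' : f = n + k - 1 := by omega
    rw [if_neg (by omega), if_neg (by omega), if_neg (by omega)]
    simp only [Nat.add_sub_cancel]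
    rw [hf', hlog1, ← hn]
    rw [if_neg (by omega), if_neg (by omega)]
    congr 1 <;> omega
  -- Step 2: unfold cfA b (n + 1 - k)
  set m := n + 1 - k with hm
  have hm6 : 2 ^ j' + 2 ≤ m := by omega
  have hmn : m ≤ n - 1 := by omega
  have hlog2 : Nat.log2 (m - 1) = j' := by
    rw [Nat.log2_eq_log_two]
    apply Nat.log_eq_of_pow_le_of_lt_pow
    · omega
    · rw [pow_succ]; omega
  have step2 : cfA b m = cfAAux b (m - 1) k := by
    show cfAAux b m m = _
    obtain ⟨f, hf⟩ : ∃ f, m = f + 1 := ⟨m - 1, by omega⟩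
    have hf' : f = m - 1 := by omega
    rw [hf, cfAAux_succ]
    rw [if_neg (by omega), if_neg (by omega), if_neg (by omega)]
    simp only [Nat.add_sub_cancel]
    rw [hf', hlog2]
    rw [if_neg (by omega), if_neg (by omega)]
    congr 1 <;> omega
  rw [step1, cfAAux_congr b (n + k - 1) m (n + 1 - k) (by omega) (by omega)]
  show cfA b k = cfA b m
  rw [step2, cfAAux_congr b (m - 1) k k (by omega) (le_refl k)]
  rfl
end

section
/- All partial quotients a_k of the continued fraction of x(b), b ≥ 3, satisfy 1 ≤ a_k ≤ b + 2. -/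
/-! The terms `a_k` with `2 ^ i < k ≤ 2 ^ (i + 1)` form the block that `C(i + 1)` appends to
`C(i)`. Inside the block `a_k` mirrors the earlier term `a_(2 ^ (i + 1) + 1 - k)`; its first term is
`a_(2 ^ i) - 2` and its last is `a_1 + 1 = b`. So `a_(2 ^ i) ∈ [b, b + 2]`, and by strong induction
every `a_k` lies in `[b - 2, b + 2]`, which is positive once `b ≥ 3`. -/

open Set

namespace Nat

theorem two_pow_log2_pred_lt {k : ℕ} (hk : 2 ≤ k) : 2 ^ log2 (k - 1) < k :=
  lt_of_le_of_lt (log2_self_le (by omega)) (by omega)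

theorem le_two_pow_log2_pred_succ (k : ℕ) : k ≤ 2 ^ (log2 (k - 1) + 1) := by
  have := (k - 1).lt_log2_self
  omega

theorem log2_pred_eq {i k : ℕ} (h₁ : 2 ^ i < k) (h₂ : k ≤ 2 ^ (i + 1)) : log2 (k - 1) = i := by
  have hk : k - 1 ≠ 0 := by have := i.one_le_two_pow; omega
  exact le_antisymm (Nat.lt_succ_iff.mp ((log2_lt hk).mpr (by omega))) ((le_log2 hk).mpr (by omega))

end Nat

section

variable (b : ℤ)

theorem cfAAux_zero (f : ℕ) : cfAAux b f 0 = 0 := by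
  cases f <;> rfl

theorem cfAAux_eq_cfA {f k : ℕ} (h : k ≤ f) : cfAAux b f k = cfA b k := by
  induction k using Nat.strong_induction_on generalizing f with
  | _ k ih =>
  obtain rfl | hk := Nat.eq_zero_or_pos k
  · simp only [cfA, cfAAux_zero]
  obtain ⟨f, rfl⟩ := Nat.exists_eq_add_one_of_ne_zero (show f ≠ 0 by omega)
  obtain ⟨k', rfl⟩ := Nat.exists_eq_add_one_of_ne_zero hk.ne'
  have hlt : 2 ≤ k' + 1 → 2 ^ Nat.log2 (k' + 1 - 1) < k' + 1 := Nat.two_pow_log2_pred_lt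
  have hle := pow_succ 2 _ ▸ Nat.le_two_pow_log2_pred_succ (k' + 1)
  simp only [cfA, cfAAux]
  split_ifs <;>
    first
    | rfl
    | rw [ih _ (by omega) (by omega), ih _ (by omega) (by omega)]

theorem cfA_one : cfA b 1 = b - 1 := rfl

theorem cfA_two : cfA b 2 = b + 2 := rfl

theorem cfA_fold {i k : ℕ} (hi : 1 ≤ i) (h₁ : 2 ^ i < k) (h₂ : k ≤ 2 ^ (i + 1)) :
    cfA b k =
      if k = 2 ^ i + 1 then cfA b (2 ^ i) - 2
      else if k = 2 ^ (i + 1) then b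
      else cfA b (2 ^ (i + 1) + 1 - k) := by
  have hi2 : 2 ≤ 2 ^ i := by simpa using Nat.pow_le_pow_right two_pos hi
  obtain ⟨f, rfl⟩ := Nat.exists_eq_add_one_of_ne_zero (show k ≠ 0 by omega)
  rw [pow_succ] at h₂ ⊢
  have hlog := Nat.log2_pred_eq h₁ (by rwa [pow_succ])
  conv_lhs => rw [cfA, cfAAux]
  simp only [hlog, if_neg (show f + 1 ≠ 0 by omega), if_neg (show f + 1 ≠ 1 by omega),
    if_neg (show f + 1 ≠ 2 by omega), mul_comm 2 (2 ^ i)]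
  rw [cfAAux_eq_cfA b (show 2 ^ i ≤ f by omega), cfAAux_eq_cfA b (show 1 ≤ f by omega),
    cfAAux_eq_cfA b (show 2 ^ i * 2 + 1 - (f + 1) ≤ f by omega), cfA_one, sub_add_cancel]

theorem cfA_two_pow_mem_Icc {i : ℕ} (hi : 1 ≤ i) : cfA b (2 ^ i) ∈ Icc b (b + 2) := by
  obtain rfl | hi := hi.eq_or_lt
  · simp [cfA_two]
  obtain ⟨i, rfl⟩ := Nat.exists_eq_add_one_of_ne_zero (show i ≠ 0 by omega)
  have hi2 : 4 ≤ 2 ^ (i + 1) := by simpa using Nat.pow_le_pow_right two_pos hi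
  rw [cfA_fold b (by omega) (Nat.pow_lt_pow_right one_lt_two (by omega)) le_rfl,
    if_neg (by rw [pow_succ]; omega), if_pos rfl]
  simp

theorem cfA_mem_Icc {k : ℕ} (hk : 1 ≤ k) : cfA b k ∈ Icc (b - 2) (b + 2) := by
  induction k using Nat.strong_induction_on with
  | _ k ih =>
  obtain rfl | rfl | hk3 : k = 1 ∨ k = 2 ∨ 3 ≤ k := by omega
  · rw [cfA_one, mem_Icc]; constructor <;> omega
  · rw [cfA_two, mem_Icc]; constructor <;> omega
  set i := Nat.log2 (k - 1)
  have hi : 1 ≤ i := (Nat.le_log2 (by omega)).mpr (by omega)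
  have h₁ : 2 ^ i < k := Nat.two_pow_log2_pred_lt (by omega)
  have h₂ : k ≤ 2 ^ (i + 1) := Nat.le_two_pow_log2_pred_succ k
  rw [cfA_fold b hi h₁ h₂]
  split_ifs with hfirst hlast
  · obtain ⟨hlo, hhi⟩ := cfA_two_pow_mem_Icc b hi
    constructor <;> omega
  · constructor <;> omega
  · exact ih _ (by omega) (by omega)

end

theorem a_bounds (b : ℤ) (hb : 3 ≤ b) (k : ℕ) (hk : 1 ≤ k) :
    1 ≤ cfA b k ∧ cfA b k ≤ b + 2 := by
  obtain ⟨hlo, hhi⟩ := cfA_mem_Icc b hk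
  exact ⟨by omega, hhi⟩
end

section
/- For n = 2^j with j ≥ 2, the n-th partial quotient of x(b) satisfies a_n = b. -/
lemma cfAAux_one (b : ℤ) (m : ℕ) : cfAAux b (m + 1) 1 = b - 1 := by
  simp [cfAAux]

lemma log2_pow_sub_one {j : ℕ} (hj : 1 ≤ j) : Nat.log2 (2 ^ j - 1) = j - 1 := by
  rw [Nat.log2_eq_log_two]
  apply Nat.log_eq_of_pow_le_of_lt_pow
  · have : 2 ^ (j - 1) + 2 ^ (j - 1) ≤ 2 ^ j := by
      rw [← two_mul, ← pow_succ']
      exact Nat.pow_le_pow_right (by norm_num) (by omega)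
    have h1 : 1 ≤ 2 ^ (j - 1) := Nat.one_le_two_pow
    omega
  · rw [Nat.sub_add_cancel hj]
    have h1 : 1 ≤ 2 ^ j := Nat.one_le_two_pow
    omega

theorem a_pow_two (b : ℤ) (hb : 3 ≤ b) (j : ℕ) (hj : 2 ≤ j) :
    cfA b (2 ^ j) = b := by
  have h4 : 4 ≤ 2 ^ j := by
    calc (4:ℕ) = 2 ^ 2 := by norm_num
    _ ≤ 2 ^ j := Nat.pow_le_pow_right (by norm_num) hj
  obtain ⟨m, hm⟩ : ∃ m, 2 ^ j = m + 4 := ⟨2 ^ j - 4, by omega⟩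
  have hlog : Nat.log2 (2 ^ j - 1) = j - 1 := log2_pow_sub_one (by omega)
  have hn : 2 ^ Nat.log2 (2 ^ j - 1) = 2 ^ (j - 1) := by rw [hlog]
  have h2n : 2 * 2 ^ (j - 1) = 2 ^ j := by
    rw [← pow_succ']; congr 1; omega
  have hne1 : 2 ^ j ≠ 2 ^ (j - 1) + 1 := by
    have : 2 ^ (j - 1) + 2 ^ (j - 1) = 2 ^ j := by rw [← two_mul, h2n]
    have h2 : 2 ≤ 2 ^ (j - 1) := by
      calc (2:ℕ) = 2 ^ 1 := rfl
      _ ≤ 2 ^ (j - 1) := Nat.pow_le_pow_right (by norm_num) (by omega)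
    omega
  rw [cfA, hm]
  show cfAAux b (m + 3 + 1) (m + 4) = b
  rw [cfAAux]
  simp only [show m + 4 ≠ 0 by omega, show m + 4 ≠ 1 by omega,
    show m + 4 ≠ 2 by omega, if_false]
  rw [show m + 4 - 1 = 2 ^ j - 1 by omega]
  rw [hn]
  rw [if_neg (by omega), if_pos (by omega)]
  obtain ⟨p, hp⟩ : ∃ p, m + 3 = p + 1 := ⟨m + 2, rfl⟩
  rw [hp, cfAAux_one]; ring
end
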